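/- For m ≥ 0, n ≥ 2, and 1 ≤ s ≤ n-1, the multivariable block shuffle product satisfies the splitting identity: x_{b_1}⋯x_{b_m} ◇ e_{a_1}⋯e_{a_n} = Σ_{k=0}^{m} (x_{b_1}⋯x_{b_k} ◇ e_{a_1}⋯e_{a_s})·ι^{b_1+⋯+b_k-k}(x_{b_{k+1}}⋯x_{b_m} ◇ e_{a_{s+1}}⋯e_{a_n}) + Σ_{0 ≤ k < l ≤ m} (-1)^{l-k} (x_{b_1}⋯x_{b_k} ◇ e_{a_1}⋯e_{a_s})·U(b_{k+1}+⋯+b_l)·ι^{b_1+⋯+b_l-l}(x_{b_{l+1}}⋯x_{b_m} ◇ e_{a_{s+1}}⋯e_{a_n}). -/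

import Mathlib

noncomputable section
namespace BlockShuffle

abbrev AA : Type := MonoidAlgebra ℚ (FreeMonoid ℂ)
def wA (w : List ℂ) : AA := MonoidAlgebra.single (FreeMonoid.ofList w) 1
def iC : ℂ → ℂ := fun z => 1 - z
def Wword (t : ℂ) (b : ℕ) : List ℂ := List.ofFn fun i : Fin b => iC^[(i : ℕ)] t
def Uel (b : ℕ) : AA := wA (Wword 0 b) + wA (Wword 1 b)
def iAs (s : ℕ) : AA →ₗ[ℚ] AA := MonoidAlgebra.mapDomainLinearMap ℚ ℚ (FreeMonoid.map (iC^[s]))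

/-- The multivariable block shuffle product `◇ : 𝔛 × 𝒜⁺ → 𝒜⁺` on words, defined by the
recursion `x_{b₁}⋯x_{b_m} ◇ e_{a₁}⋯e_{a_n} = Σ_{k=1}^{m} (-1)^{k-1} e_{a₁}
U(b₁+⋯+b_k-1)·ι^{b₁+⋯+b_k-k}(x_{b_{k+1}}⋯x_{b_m} ◇ e_{a₁}⋯e_{a_n}) + Σ_{k=1}^{m} (-1)^k
e_{a₁} U(b₁+⋯+b_k)·ι^{b₁+⋯+b_k-k}(x_{b_{k+1}}⋯x_{b_m} ◇ e_{a₂}⋯e_{a_n}) +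
e_{a₁}(x_{b₁}⋯x_{b_m} ◇ e_{a₂}⋯e_{a_n})`, with `w ◇ (empty word) = 0` and
`x_∅ ◇ w = w`. -/
def mdsh : List ℕ → List ℂ → AA
  | [], [] => 0
  | [], a :: as => wA (a :: as)
  | _ :: _, [] => 0
  | b₁ :: bs, a :: as =>
      (∑ k ∈ Finset.range (b₁ :: bs).length,
        ((-1 : ℚ) ^ k) •
          (wA [a] * Uel (((b₁ :: bs).take (k + 1)).sum - 1) *
            iAs (((b₁ :: bs).take (k + 1)).sum - (k + 1))
              (mdsh ((b₁ :: bs).drop (k + 1)) (a :: as)))) +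
      (∑ k ∈ Finset.range (b₁ :: bs).length,
        ((-1 : ℚ) ^ (k + 1)) •
          (wA [a] * Uel (((b₁ :: bs).take (k + 1)).sum) *
            iAs (((b₁ :: bs).take (k + 1)).sum - (k + 1))
              (mdsh ((b₁ :: bs).drop (k + 1)) as))) +
      wA [a] * mdsh (b₁ :: bs) as
  termination_by u v => u.length + v.length
  decreasing_by all_goals simp [List.length_drop]; all_goals omega

lemma wA_mul (u v : List ℂ) : wA u * wA v = wA (u ++ v) := by
  simp only [wA, MonoidAlgebra.single_mul_single, one_mul]
  rfl

lemma iAs_apply (s : ℕ) (x : AA) :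
    iAs s x = MonoidAlgebra.mapDomain (⇑(FreeMonoid.map (iC^[s]))) x := rfl

lemma iAs_mul (s : ℕ) (x y : AA) : iAs s (x * y) = iAs s x * iAs s y := by
  simp only [iAs_apply]
  exact MonoidAlgebra.mapDomain_mul (MonoidHom.toMulHom (FreeMonoid.map (iC^[s]))) x y

lemma iC_invol (z : ℂ) : iC (iC z) = z := by simp [iC]

lemma iAs_iAs (s t : ℕ) (x : AA) : iAs s (iAs t x) = iAs (s + t) x := by
  simp only [iAs_apply]
  rw [show ∀ (f g : FreeMonoid ℂ → FreeMonoid ℂ) (y : AA), MonoidAlgebra.mapDomain f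
      (MonoidAlgebra.mapDomain g y) = MonoidAlgebra.mapDomain (f ∘ g) y from
      fun f g y => by ext; simp [Finsupp.mapDomain_comp]]
  congr 1
  ext w
  induction w using FreeMonoid.recOn with
  | one => simp
  | of_mul a w ih =>
      simp only [Function.comp_apply, map_mul] at *
      rw [ih]
      congr 1
      show FreeMonoid.of (iC^[s] (iC^[t] a)) = FreeMonoid.of (iC^[s+t] a)
      rw [← Function.iterate_add_apply, Nat.add_comm]

lemma iAs_wA (s : ℕ) (w : List ℂ) : iAs s (wA w) = wA (w.map (iC^[s])) := by
  rw [iAs_apply, wA, wA, MonoidAlgebra.mapDomain_single]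
  rfl

lemma iC_iterate_even (s : ℕ) (h : s % 2 = 0) : iC^[s] = id := by
  obtain ⟨t, rfl⟩ : ∃ t, s = 2 * t := ⟨s / 2, by omega⟩
  induction t with
  | zero => rfl
  | succ t ih =>
      rw [show 2 * (t+1) = (2*t) + 2 by ring, Function.iterate_add]
      rw [ih (by omega)]
      funext z
      simp [iC]

lemma iC_iterate_odd (s : ℕ) (h : s % 2 = 1) : iC^[s] = iC := by
  obtain ⟨t, rfl⟩ : ∃ t, s = 2 * t + 1 := ⟨s / 2, by omega⟩
  rw [Function.iterate_add, iC_iterate_even (2*t) (by omega)]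
  rfl

lemma Wword_map (t : ℂ) (b : ℕ) : (Wword t b).map iC = Wword (iC t) b := by
  simp only [Wword, List.map_ofFn]
  congr 1
  funext i
  show iC (iC^[(i:ℕ)] t) = iC^[(i:ℕ)] (iC t)
  rw [← Function.iterate_succ_apply, Function.iterate_succ_apply']

lemma iAs_Uel (s b : ℕ) : iAs s (Uel b) = Uel b := by
  rcases Nat.mod_two_eq_zero_or_one s with h | h
  · simp [Uel, map_add, iAs_wA, iC_iterate_even s h]
  · simp only [Uel, map_add, iAs_wA, iC_iterate_odd s h, Wword_map]
    rw [show iC 0 = 1 by simp [iC], show iC 1 = 0 by simp [iC], add_comm]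

lemma mdsh_nil_right (B : List ℕ) : mdsh B [] = 0 := by
  cases B <;> rw [mdsh]

lemma mdsh_nil_left (a : ℂ) (as : List ℂ) : mdsh [] (a :: as) = wA (a :: as) := by
  rw [mdsh]

lemma iAs_zero_ap (x : AA) : iAs 0 x = x := by
  rw [iAs_apply]
  have : ⇑(FreeMonoid.map (iC^[0])) = id := by
    funext w
    induction w using FreeMonoid.recOn with
    | one => simp
    | of_mul a w ih => simp only [map_mul, ih]; rfl
  rw [this, show MonoidAlgebra.mapDomain id x = x from by ext; simp [Finsupp.mapDomain_id]]

section sums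
variable {M : Type} [AddCommMonoid M]

lemma sum_range_cons_guard (k m : ℕ) (h : k ≤ m) (f : ℕ → M) :
    ∑ i ∈ Finset.range k, f (i + 1) =
      ∑ j ∈ Finset.range (m + 1), if 1 ≤ j ∧ j ≤ k then f j else 0 := by
  rw [← Finset.sum_subset (Finset.range_subset_range.mpr (by omega) :
      Finset.range (k+1) ⊆ Finset.range (m+1))
    (by intro x hx hxk; rw [if_neg]; simp only [Finset.mem_range] at hx hxk; omega)]
  rw [Finset.sum_range_succ']
  rw [if_neg (by omega), add_zero]
  refine (Finset.sum_congr rfl fun i hi => ?_).symm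
  simp only [Finset.mem_range] at hi
  rw [if_pos (by omega)]

lemma sum_range_window (j m : ℕ) (h : j ≤ m) (f : ℕ → M) :
    ∑ i ∈ Finset.range (m - j + 1), f (j + i) =
      ∑ k ∈ Finset.range (m + 1), if j ≤ k then f k else 0 := by
  rw [Finset.sum_ite, Finset.sum_const_zero, add_zero]
  have : Finset.filter (fun k => j ≤ k) (Finset.range (m+1)) = Finset.Ico j (m+1) := by
    ext x; simp [Nat.lt_succ_iff]; omega
  rw [this, Finset.sum_Ico_eq_sum_range, show m + 1 - j = m - j + 1 by omega]

end sums

lemma len_le_sum (L : List ℕ) (h : ∀ x ∈ L, 1 ≤ x) : L.length ≤ L.sum := by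
  induction L with
  | nil => simp
  | cons c cs ih =>
      simp only [List.length_cons, List.sum_cons]
      have := h c (by simp)
      have := ih (fun x hx => h x (by simp [hx]))
      omega

lemma sum_take_add (B : List ℕ) (j i : ℕ) :
    (B.take (j + i)).sum = (B.take j).sum + ((B.drop j).take i).sum := by
  rw [List.take_add, List.sum_append]

lemma sum_take_lower (B : List ℕ) (h : ∀ x ∈ B, 1 ≤ x) (k : ℕ) (hk : k ≤ B.length) :
    k ≤ (B.take k).sum := by
  have h1 : (B.take k).length ≤ (B.take k).sum :=
    len_le_sum _ (fun x hx => h x (List.mem_of_mem_take hx))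
  rw [List.length_take] at h1
  omega

lemma sum_take_mono (B : List ℕ) (j k : ℕ) (h : j ≤ k) :
    (B.take j).sum ≤ (B.take k).sum := by
  have := sum_take_add B j (k - j)
  rw [show j + (k-j) = k by omega] at this
  omega

lemma sum_slice (B : List ℕ) (j k : ℕ) (h : j ≤ k) :
    ((B.drop j).take (k - j)).sum = (B.take k).sum - (B.take j).sum := by
  have := sum_take_add B j (k - j)
  rw [show j + (k-j) = k by omega] at this
  omega

lemma slice_lower (B : List ℕ) (h : ∀ x ∈ B, 1 ≤ x) (j k : ℕ) (hjk : j ≤ k)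
    (hk : k ≤ B.length) : (B.take j).sum + (k - j) ≤ (B.take k).sum := by
  have h1 := sum_take_add B j (k - j)
  rw [show j + (k-j) = k by omega] at h1
  have h2 : ((B.drop j).take (k-j)).length ≤ ((B.drop j).take (k-j)).sum :=
    len_le_sum _ (fun x hx => h x (List.mem_of_mem_drop (List.mem_of_mem_take hx)))
  rw [List.length_take, List.length_drop] at h2
  omega

/-- Windowed right-hand side of the splitting identity. -/
def WR (B : List ℕ) (j : ℕ) (u v : List ℂ) : AA :=
  (∑ k ∈ Finset.range (B.length + 1), if j ≤ k then
      mdsh ((B.drop j).take (k - j)) u *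
        iAs ((B.take k).sum - (B.take j).sum - (k - j)) (mdsh (B.drop k) v) else 0) +
  (∑ k ∈ Finset.range (B.length + 1), ∑ l ∈ Finset.range (B.length + 1),
    if j ≤ k ∧ k < l then
      ((-1 : ℚ) ^ (l - k)) •
        (mdsh ((B.drop j).take (k - j)) u * Uel ((B.take l).sum - (B.take k).sum) *
          iAs ((B.take l).sum - (B.take j).sum - (l - j)) (mdsh (B.drop l) v)) else 0)

/-- The recursion for `mdsh`, applied to a truncation `L.take k`, in guarded form. -/
lemma mdsh_take_expand (L : List ℕ) (hL : L ≠ []) (k : ℕ) (hk1 : 1 ≤ k)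
    (hk2 : k ≤ L.length) (a : ℂ) (as : List ℂ) :
    mdsh (L.take k) (a :: as) =
      (∑ i ∈ Finset.range (L.length + 1), if 1 ≤ i ∧ i ≤ k then
        ((-1 : ℚ) ^ (i - 1)) • (wA [a] * Uel ((L.take i).sum - 1) *
          iAs ((L.take i).sum - i) (mdsh ((L.drop i).take (k - i)) (a :: as))) else 0) +
      (∑ i ∈ Finset.range (L.length + 1), if 1 ≤ i ∧ i ≤ k then
        ((-1 : ℚ) ^ i) • (wA [a] * Uel ((L.take i).sum) *
          iAs ((L.take i).sum - i) (mdsh ((L.drop i).take (k - i)) as)) else 0) +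
      wA [a] * mdsh (L.take k) as := by
  obtain ⟨c, cs, rfl⟩ := List.exists_cons_of_ne_nil hL
  have htake : (c :: cs).take k = c :: cs.take (k - 1) := by
    cases k with
    | zero => omega
    | succ k => simp
  conv_lhs => rw [htake, mdsh, ← htake]
  have hlen : ((c :: cs).take k).length = k := by
    rw [List.length_take]
    simp only [List.length_cons] at hk2 ⊢
    omega
  rw [hlen]
  congr 1
  · congr 1
    · rw [← sum_range_cons_guard k (c :: cs).length hk2]
      refine Finset.sum_congr rfl fun i hi => ?_
      simp only [Finset.mem_range] at hi
      rw [List.take_take, Nat.min_eq_left (by omega), List.drop_take,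
        Nat.add_sub_cancel]
    · rw [← sum_range_cons_guard k (c :: cs).length hk2]
      refine Finset.sum_congr rfl fun i hi => ?_
      simp only [Finset.mem_range] at hi
      rw [List.take_take, Nat.min_eq_left (by omega), List.drop_take]

lemma window_guard {M : Type} [AddCommMonoid M] (j m : ℕ) (h : j ≤ m)
    (p : ℕ → Prop) [DecidablePred p] (hp : ∀ i, p i → j ≤ i) (f : ℕ → M) :
    ∑ i' ∈ Finset.range (m - j + 1), (if p (j + i') then f (j + i') else 0) =
      ∑ i ∈ Finset.range (m + 1), if p i then f i else 0 := by
  rw [sum_range_window j m h (fun i => if p i then f i else 0)]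
  refine Finset.sum_congr rfl fun i _ => ?_
  by_cases hpi : p i
  · rw [if_pos (hp i hpi)]
  · by_cases hj : j ≤ i <;> simp [hj, hpi]

/-- Windowed form of the recursion, in global indices. -/
lemma mdsh_win_expand (B : List ℕ) (j k : ℕ) (hjk : j < k) (hk : k ≤ B.length)
    (a : ℂ) (as : List ℂ) :
    mdsh ((B.drop j).take (k - j)) (a :: as) =
      (∑ i ∈ Finset.range (B.length + 1), if j < i ∧ i ≤ k then
        ((-1 : ℚ) ^ (i - j - 1)) • (wA [a] * Uel ((B.take i).sum - (B.take j).sum - 1) *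
          iAs ((B.take i).sum - (B.take j).sum - (i - j))
            (mdsh ((B.drop i).take (k - i)) (a :: as))) else 0) +
      (∑ i ∈ Finset.range (B.length + 1), if j < i ∧ i ≤ k then
        ((-1 : ℚ) ^ (i - j)) • (wA [a] * Uel ((B.take i).sum - (B.take j).sum) *
          iAs ((B.take i).sum - (B.take j).sum - (i - j))
            (mdsh ((B.drop i).take (k - i)) as)) else 0) +
      wA [a] * mdsh ((B.drop j).take (k - j)) as := by
  have hL : B.drop j ≠ [] := by
    apply List.ne_nil_of_length_pos
    rw [List.length_drop]; omega
  rw [mdsh_take_expand (B.drop j) hL (k - j) (by omega)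
    (by rw [List.length_drop]; omega) a as]
  congr 1
  congr 1
  · rw [List.length_drop,
      ← window_guard j B.length (by omega) (fun i => j < i ∧ i ≤ k) (fun i hi => hi.1.le)]
    refine Finset.sum_congr rfl fun i' hi' => ?_
    simp only [Finset.mem_range] at hi'
    by_cases hg : 1 ≤ i' ∧ i' ≤ k - j
    · rw [if_pos hg, if_pos (show j < j + i' ∧ j + i' ≤ k by omega)]
      have hsl : ((B.drop j).take i').sum = (B.take (j+i')).sum - (B.take j).sum := by
        have := sum_slice B j (j + i') (by omega)
        rwa [Nat.add_sub_cancel_left] at this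
      rw [Nat.add_sub_cancel_left, hsl, List.drop_drop, Nat.sub_sub k j i']
    · rw [if_neg hg, if_neg (by omega)]
  · rw [List.length_drop,
      ← window_guard j B.length (by omega) (fun i => j < i ∧ i ≤ k) (fun i hi => hi.1.le)]
    refine Finset.sum_congr rfl fun i' hi' => ?_
    simp only [Finset.mem_range] at hi'
    by_cases hg : 1 ≤ i' ∧ i' ≤ k - j
    · rw [if_pos hg, if_pos (show j < j + i' ∧ j + i' ≤ k by omega)]
      have hsl : ((B.drop j).take i').sum = (B.take (j+i')).sum - (B.take j).sum := by
        have := sum_slice B j (j + i') (by omega)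
        rwa [Nat.add_sub_cancel_left] at this
      rw [Nat.add_sub_cancel_left, hsl, List.drop_drop, Nat.sub_sub k j i']
    · rw [if_neg hg, if_neg (by omega)]

lemma ite_sum {M : Type} [AddCommMonoid M] (P : Prop) [Decidable P] (s : Finset ℕ)
    (f : ℕ → M) :
    (if P then ∑ k ∈ s, f k else 0) = ∑ k ∈ s, if P then f k else 0 := by
  split_ifs <;> simp

lemma take_all_drop (B : List ℕ) (i : ℕ) :
    (B.drop i).take (B.length - i) = B.drop i :=
  List.take_of_length_le (by rw [List.length_drop])

lemma exp_add (B : List ℕ) (hB : ∀ x ∈ B, 1 ≤ x) (j i k : ℕ) (hji : j ≤ i)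
    (hik : i ≤ k) (hk : k ≤ B.length) :
    ((B.take i).sum - (B.take j).sum - (i - j)) +
      ((B.take k).sum - (B.take i).sum - (k - i)) =
      (B.take k).sum - (B.take j).sum - (k - j) := by
  have h1 := slice_lower B hB j i hji (le_trans hik hk)
  have h2 := slice_lower B hB i k hik hk
  have h3 := sum_take_mono B j i hji
  have h4 := sum_take_mono B i k hik
  omega

/-- Full-tail version of the windowed recursion. -/
lemma mdsh_drop_expand (B : List ℕ) (j : ℕ) (hj : j < B.length) (a : ℂ) (as : List ℂ) :
    mdsh (B.drop j) (a :: as) =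
      (∑ i ∈ Finset.range (B.length + 1), if j < i ∧ i ≤ B.length then
        ((-1 : ℚ) ^ (i - j - 1)) • (wA [a] * Uel ((B.take i).sum - (B.take j).sum - 1) *
          iAs ((B.take i).sum - (B.take j).sum - (i - j))
            (mdsh (B.drop i) (a :: as))) else 0) +
      (∑ i ∈ Finset.range (B.length + 1), if j < i ∧ i ≤ B.length then
        ((-1 : ℚ) ^ (i - j)) • (wA [a] * Uel ((B.take i).sum - (B.take j).sum) *
          iAs ((B.take i).sum - (B.take j).sum - (i - j))
            (mdsh (B.drop i) as)) else 0) +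
      wA [a] * mdsh (B.drop j) as := by
  have h := mdsh_win_expand B j B.length hj le_rfl a as
  rw [take_all_drop] at h
  rw [h]
  congr 1
  congr 1
  · refine Finset.sum_congr rfl fun i _ => ?_
    by_cases hg : j < i ∧ i ≤ B.length
    · rw [if_pos hg, if_pos hg, take_all_drop]
    · rw [if_neg hg, if_neg hg]
  · refine Finset.sum_congr rfl fun i _ => ?_
    by_cases hg : j < i ∧ i ≤ B.length
    · rw [if_pos hg, if_pos hg, take_all_drop]
    · rw [if_neg hg, if_neg hg]

/-- Left-factor expansion, nonempty tail case. -/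
lemma XA (B : List ℕ) (j k : ℕ) (hjk : j ≤ k) (hk : k ≤ B.length)
    (a : ℂ) (w : List ℂ) (hw : w ≠ []) :
    mdsh ((B.drop j).take (k - j)) (a :: w) =
      (∑ i ∈ Finset.range (B.length + 1), if j < i ∧ i ≤ k then
        ((-1 : ℚ) ^ (i - j - 1)) • (wA [a] * Uel ((B.take i).sum - (B.take j).sum - 1) *
          iAs ((B.take i).sum - (B.take j).sum - (i - j))
            (mdsh ((B.drop i).take (k - i)) (a :: w))) else 0) +
      (∑ i ∈ Finset.range (B.length + 1), if j < i ∧ i ≤ k then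
        ((-1 : ℚ) ^ (i - j)) • (wA [a] * Uel ((B.take i).sum - (B.take j).sum) *
          iAs ((B.take i).sum - (B.take j).sum - (i - j))
            (mdsh ((B.drop i).take (k - i)) w)) else 0) +
      wA [a] * mdsh ((B.drop j).take (k - j)) w := by
  rcases Nat.lt_or_ge j k with h | h
  · exact mdsh_win_expand B j k h hk a w
  · have hkj : k = j := by omega
    subst hkj
    rw [Nat.sub_self, List.take_zero]
    obtain ⟨c, cs, rfl⟩ := List.exists_cons_of_ne_nil hw
    rw [mdsh_nil_left, mdsh_nil_left,
      Finset.sum_eq_zero (fun i _ => if_neg (by omega)),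
      Finset.sum_eq_zero (fun i _ => if_neg (by omega)), zero_add, zero_add,
      wA_mul]
    rfl

/-- Left-factor expansion, empty tail case. -/
lemma XB (B : List ℕ) (j k : ℕ) (hjk : j ≤ k) (hk : k ≤ B.length) (a : ℂ) :
    mdsh ((B.drop j).take (k - j)) [a] =
      (∑ i ∈ Finset.range (B.length + 1), if j < i ∧ i ≤ k then
        ((-1 : ℚ) ^ (i - j - 1)) • (wA [a] * Uel ((B.take i).sum - (B.take j).sum - 1) *
          iAs ((B.take i).sum - (B.take j).sum - (i - j))
            (mdsh ((B.drop i).take (k - i)) [a])) else 0) +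
      (if k = j then wA [a] else 0) := by
  rcases Nat.lt_or_ge j k with h | h
  · have hz : (∑ i ∈ Finset.range (B.length + 1), if j < i ∧ i ≤ k then
        ((-1 : ℚ) ^ (i - j)) • (wA [a] * Uel ((B.take i).sum - (B.take j).sum) *
          iAs ((B.take i).sum - (B.take j).sum - (i - j))
            (mdsh ((B.drop i).take (k - i)) ([] : List ℂ))) else 0) = 0 := by
      refine Finset.sum_eq_zero fun i _ => ?_
      by_cases hg : j < i ∧ i ≤ k
      · rw [if_pos hg, mdsh_nil_right, map_zero, mul_zero, smul_zero]
      · rw [if_neg hg]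
    rw [mdsh_win_expand B j k h hk a [], hz, add_zero, mdsh_nil_right, mul_zero,
      add_zero, if_neg (by omega), add_zero]
  · have hkj : k = j := by omega
    subst hkj
    rw [Nat.sub_self, List.take_zero, if_pos rfl,
      Finset.sum_eq_zero (fun i _ => if_neg (by omega)), zero_add]
    rw [show mdsh [] [a] = wA [a] from mdsh_nil_left a []]

def C1 (B : List ℕ) (j : ℕ) (a : ℂ) (w v : List ℂ) : AA :=
  ∑ k ∈ Finset.range (B.length + 1), ∑ i ∈ Finset.range (B.length + 1),
    if j < i ∧ i ≤ k then
      ((-1 : ℚ) ^ (i - j - 1)) • (wA [a] * Uel ((B.take i).sum - (B.take j).sum - 1) *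
        iAs ((B.take i).sum - (B.take j).sum - (i - j))
          (mdsh ((B.drop i).take (k - i)) (a :: w)) *
        iAs ((B.take k).sum - (B.take j).sum - (k - j)) (mdsh (B.drop k) v)) else 0

def C2 (B : List ℕ) (j : ℕ) (a : ℂ) (w v : List ℂ) : AA :=
  ∑ k ∈ Finset.range (B.length + 1), ∑ l ∈ Finset.range (B.length + 1),
    ∑ i ∈ Finset.range (B.length + 1),
    if j < i ∧ i ≤ k ∧ k < l then
      ((-1 : ℚ) ^ (l - k) * (-1 : ℚ) ^ (i - j - 1)) •
        (wA [a] * Uel ((B.take i).sum - (B.take j).sum - 1) *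
          iAs ((B.take i).sum - (B.take j).sum - (i - j))
            (mdsh ((B.drop i).take (k - i)) (a :: w)) *
          Uel ((B.take l).sum - (B.take k).sum) *
          iAs ((B.take l).sum - (B.take j).sum - (l - j)) (mdsh (B.drop l) v)) else 0

def C3 (B : List ℕ) (j : ℕ) (a : ℂ) (w v : List ℂ) : AA :=
  ∑ k ∈ Finset.range (B.length + 1), ∑ i ∈ Finset.range (B.length + 1),
    if j < i ∧ i ≤ k then
      ((-1 : ℚ) ^ (i - j)) • (wA [a] * Uel ((B.take i).sum - (B.take j).sum) *
        iAs ((B.take i).sum - (B.take j).sum - (i - j))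
          (mdsh ((B.drop i).take (k - i)) w) *
        iAs ((B.take k).sum - (B.take j).sum - (k - j)) (mdsh (B.drop k) v)) else 0

def C4 (B : List ℕ) (j : ℕ) (a : ℂ) (w v : List ℂ) : AA :=
  ∑ k ∈ Finset.range (B.length + 1), ∑ l ∈ Finset.range (B.length + 1),
    ∑ i ∈ Finset.range (B.length + 1),
    if j < i ∧ i ≤ k ∧ k < l then
      ((-1 : ℚ) ^ (l - k) * (-1 : ℚ) ^ (i - j)) •
        (wA [a] * Uel ((B.take i).sum - (B.take j).sum) *
          iAs ((B.take i).sum - (B.take j).sum - (i - j))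
            (mdsh ((B.drop i).take (k - i)) w) *
          Uel ((B.take l).sum - (B.take k).sum) *
          iAs ((B.take l).sum - (B.take j).sum - (l - j)) (mdsh (B.drop l) v)) else 0

def C5 (B : List ℕ) (j : ℕ) (a : ℂ) (w v : List ℂ) : AA :=
  ∑ k ∈ Finset.range (B.length + 1),
    if j ≤ k then
      wA [a] * (mdsh ((B.drop j).take (k - j)) w *
        iAs ((B.take k).sum - (B.take j).sum - (k - j)) (mdsh (B.drop k) v)) else 0

def C6 (B : List ℕ) (j : ℕ) (a : ℂ) (w v : List ℂ) : AA :=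
  ∑ k ∈ Finset.range (B.length + 1), ∑ l ∈ Finset.range (B.length + 1),
    if j ≤ k ∧ k < l then
      ((-1 : ℚ) ^ (l - k)) •
        (wA [a] * (mdsh ((B.drop j).take (k - j)) w *
          Uel ((B.take l).sum - (B.take k).sum) *
          iAs ((B.take l).sum - (B.take j).sum - (l - j)) (mdsh (B.drop l) v))) else 0

lemma expandR_A (B : List ℕ) (j : ℕ) (a : ℂ) (w v : List ℂ) (hw : w ≠ []) :
    WR B j (a :: w) v =
      (C1 B j a w v + C3 B j a w v + C5 B j a w v) +
      (C2 B j a w v + C4 B j a w v + C6 B j a w v) := by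
  rw [WR, C1, C2, C3, C4, C5, C6]
  congr 1
  · rw [← Finset.sum_add_distrib, ← Finset.sum_add_distrib]
    refine Finset.sum_congr rfl fun k hk => ?_
    simp only [Finset.mem_range] at hk
    by_cases hgk : j ≤ k
    · rw [if_pos hgk, if_pos hgk, XA B j k hgk (by omega) a w hw, add_mul, add_mul,
        Finset.sum_mul, Finset.sum_mul, mul_assoc]
      congr 2 <;>
      · refine Finset.sum_congr rfl fun i _ => ?_
        rw [ite_mul, zero_mul, smul_mul_assoc]
    · rw [if_neg hgk, if_neg hgk,
        Finset.sum_eq_zero (fun i (_ : i ∈ Finset.range (B.length + 1)) =>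
          if_neg (fun h => hgk (by omega))),
        Finset.sum_eq_zero (fun i (_ : i ∈ Finset.range (B.length + 1)) =>
          if_neg (fun h => hgk (by omega))), add_zero, add_zero]
  · rw [← Finset.sum_add_distrib, ← Finset.sum_add_distrib]
    refine Finset.sum_congr rfl fun k hk => ?_
    rw [← Finset.sum_add_distrib, ← Finset.sum_add_distrib]
    refine Finset.sum_congr rfl fun l hl => ?_
    simp only [Finset.mem_range] at hk hl
    by_cases hg : j ≤ k ∧ k < l
    · rw [if_pos hg, if_pos hg, XA B j k hg.1 (by omega) a w hw]
      simp only [add_mul, smul_add, Finset.sum_mul, Finset.smul_sum, ite_mul,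
        zero_mul, smul_ite, smul_zero, smul_smul, smul_mul_assoc, mul_assoc]
      congr 1
      congr 1 <;>
      · refine Finset.sum_congr rfl fun i _ => ?_
        split_ifs <;> first | rfl | (exfalso; omega)
    · rw [if_neg hg, if_neg hg,
        Finset.sum_eq_zero (fun i (_ : i ∈ Finset.range (B.length + 1)) =>
          if_neg (fun h => hg (by omega))),
        Finset.sum_eq_zero (fun i (_ : i ∈ Finset.range (B.length + 1)) =>
          if_neg (fun h => hg (by omega))), add_zero, add_zero]

lemma expandL_A (B : List ℕ) (hB : ∀ x ∈ B, 1 ≤ x) (j : ℕ) (hj : j < B.length)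
    (a : ℂ) (w v : List ℂ)
    (IH1 : ∀ i, j < i → i ≤ B.length →
      mdsh (B.drop i) (a :: (w ++ v)) = WR B i (a :: w) v)
    (IH2 : ∀ i, j < i → i ≤ B.length → mdsh (B.drop i) (w ++ v) = WR B i w v)
    (IH3 : mdsh (B.drop j) (w ++ v) = WR B j w v) :
    mdsh (B.drop j) (a :: (w ++ v)) =
      (C1 B j a w v + C3 B j a w v + C5 B j a w v) +
      (C2 B j a w v + C4 B j a w v + C6 B j a w v) := by
  rw [mdsh_drop_expand B j hj a (w ++ v)]
  have h1 : (∑ i ∈ Finset.range (B.length + 1), if j < i ∧ i ≤ B.length then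
        ((-1 : ℚ) ^ (i - j - 1)) • (wA [a] * Uel ((B.take i).sum - (B.take j).sum - 1) *
          iAs ((B.take i).sum - (B.take j).sum - (i - j))
            (mdsh (B.drop i) (a :: (w ++ v)))) else 0) =
      C1 B j a w v + C2 B j a w v := by
    have key1 : ∀ i ∈ Finset.range (B.length + 1),
        (if j < i ∧ i ≤ B.length then
          ((-1 : ℚ) ^ (i - j - 1)) • (wA [a] * Uel ((B.take i).sum - (B.take j).sum - 1) *
            iAs ((B.take i).sum - (B.take j).sum - (i - j))
              (mdsh (B.drop i) (a :: (w ++ v)))) else 0) =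
        (∑ k ∈ Finset.range (B.length + 1), if j < i ∧ i ≤ k then
          ((-1 : ℚ) ^ (i - j - 1)) • (wA [a] * Uel ((B.take i).sum - (B.take j).sum - 1) *
            iAs ((B.take i).sum - (B.take j).sum - (i - j))
              (mdsh ((B.drop i).take (k - i)) (a :: w)) *
            iAs ((B.take k).sum - (B.take j).sum - (k - j)) (mdsh (B.drop k) v)) else 0) +
        (∑ k ∈ Finset.range (B.length + 1), ∑ l ∈ Finset.range (B.length + 1),
          if j < i ∧ i ≤ k ∧ k < l then
          ((-1 : ℚ) ^ (l - k) * (-1 : ℚ) ^ (i - j - 1)) •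
            (wA [a] * Uel ((B.take i).sum - (B.take j).sum - 1) *
              iAs ((B.take i).sum - (B.take j).sum - (i - j))
                (mdsh ((B.drop i).take (k - i)) (a :: w)) *
              Uel ((B.take l).sum - (B.take k).sum) *
              iAs ((B.take l).sum - (B.take j).sum - (l - j)) (mdsh (B.drop l) v)) else 0) := by
      intro i _
      by_cases hgi : j < i ∧ i ≤ B.length
      · rw [if_pos hgi, IH1 i hgi.1 hgi.2, WR, map_add, mul_add, smul_add]
        congr 1
        · rw [map_sum, Finset.mul_sum, Finset.smul_sum]
          refine Finset.sum_congr rfl fun k hk => ?_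
          simp only [Finset.mem_range] at hk
          rw [apply_ite (iAs ((B.take i).sum - (B.take j).sum - (i - j))), map_zero,
            mul_ite, mul_zero, smul_ite, smul_zero]
          by_cases hik : i ≤ k
          · rw [if_pos hik, if_pos (⟨hgi.1, hik⟩ : j < i ∧ i ≤ k), iAs_mul, iAs_iAs,
              exp_add B hB j i k hgi.1.le hik (by omega), ← mul_assoc]
          · rw [if_neg hik, if_neg (fun h => hik h.2)]
        · rw [map_sum, Finset.mul_sum, Finset.smul_sum]
          refine Finset.sum_congr rfl fun k hk => ?_
          rw [map_sum, Finset.mul_sum, Finset.smul_sum]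
          refine Finset.sum_congr rfl fun l hl => ?_
          simp only [Finset.mem_range] at hk hl
          rw [apply_ite (iAs ((B.take i).sum - (B.take j).sum - (i - j))), map_zero,
            mul_ite, mul_zero, smul_ite, smul_zero]
          by_cases hg2 : i ≤ k ∧ k < l
          · rw [if_pos hg2, if_pos (⟨hgi.1, hg2.1, hg2.2⟩ : j < i ∧ i ≤ k ∧ k < l),
              map_smul, iAs_mul, iAs_mul, iAs_Uel, iAs_iAs,
              exp_add B hB j i l hgi.1.le (by omega) (by omega),
              mul_smul_comm, smul_smul,
              mul_comm ((-1 : ℚ) ^ (i - j - 1)) ((-1 : ℚ) ^ (l - k))]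
            simp only [mul_assoc]
          · rw [if_neg hg2, if_neg (fun h => hg2 ⟨h.2.1, h.2.2⟩)]
      · rw [if_neg hgi,
          Finset.sum_eq_zero (fun k (hk : k ∈ Finset.range (B.length + 1)) =>
            if_neg (fun h => hgi ⟨h.1, by
              simp only [Finset.mem_range] at hk; omega⟩)),
          Finset.sum_eq_zero (fun k (hk : k ∈ Finset.range (B.length + 1)) =>
            Finset.sum_eq_zero (fun l (hl : l ∈ Finset.range (B.length + 1)) =>
              if_neg (fun h => hgi ⟨h.1, by
                simp only [Finset.mem_range] at hk hl; omega⟩))), add_zero]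
    rw [Finset.sum_congr rfl key1, Finset.sum_add_distrib, C1, C2, Finset.sum_comm]
    congr 1
    rw [Finset.sum_comm]
    exact Finset.sum_congr rfl fun k _ => Finset.sum_comm
  have h2 : (∑ i ∈ Finset.range (B.length + 1), if j < i ∧ i ≤ B.length then
        ((-1 : ℚ) ^ (i - j)) • (wA [a] * Uel ((B.take i).sum - (B.take j).sum) *
          iAs ((B.take i).sum - (B.take j).sum - (i - j))
            (mdsh (B.drop i) (w ++ v))) else 0) =
      C3 B j a w v + C4 B j a w v := by
    have key2 : ∀ i ∈ Finset.range (B.length + 1),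
        (if j < i ∧ i ≤ B.length then
          ((-1 : ℚ) ^ (i - j)) • (wA [a] * Uel ((B.take i).sum - (B.take j).sum) *
            iAs ((B.take i).sum - (B.take j).sum - (i - j))
              (mdsh (B.drop i) (w ++ v))) else 0) =
        (∑ k ∈ Finset.range (B.length + 1), if j < i ∧ i ≤ k then
          ((-1 : ℚ) ^ (i - j)) • (wA [a] * Uel ((B.take i).sum - (B.take j).sum) *
            iAs ((B.take i).sum - (B.take j).sum - (i - j))
              (mdsh ((B.drop i).take (k - i)) w) *
            iAs ((B.take k).sum - (B.take j).sum - (k - j)) (mdsh (B.drop k) v)) else 0) +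
        (∑ k ∈ Finset.range (B.length + 1), ∑ l ∈ Finset.range (B.length + 1),
          if j < i ∧ i ≤ k ∧ k < l then
          ((-1 : ℚ) ^ (l - k) * (-1 : ℚ) ^ (i - j)) •
            (wA [a] * Uel ((B.take i).sum - (B.take j).sum) *
              iAs ((B.take i).sum - (B.take j).sum - (i - j))
                (mdsh ((B.drop i).take (k - i)) w) *
              Uel ((B.take l).sum - (B.take k).sum) *
              iAs ((B.take l).sum - (B.take j).sum - (l - j)) (mdsh (B.drop l) v)) else 0) := by
      intro i _
      by_cases hgi : j < i ∧ i ≤ B.length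
      · rw [if_pos hgi, IH2 i hgi.1 hgi.2, WR, map_add, mul_add, smul_add]
        congr 1
        · rw [map_sum, Finset.mul_sum, Finset.smul_sum]
          refine Finset.sum_congr rfl fun k hk => ?_
          simp only [Finset.mem_range] at hk
          rw [apply_ite (iAs ((B.take i).sum - (B.take j).sum - (i - j))), map_zero,
            mul_ite, mul_zero, smul_ite, smul_zero]
          by_cases hik : i ≤ k
          · rw [if_pos hik, if_pos (⟨hgi.1, hik⟩ : j < i ∧ i ≤ k), iAs_mul, iAs_iAs,
              exp_add B hB j i k hgi.1.le hik (by omega), ← mul_assoc]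
          · rw [if_neg hik, if_neg (fun h => hik h.2)]
        · rw [map_sum, Finset.mul_sum, Finset.smul_sum]
          refine Finset.sum_congr rfl fun k hk => ?_
          rw [map_sum, Finset.mul_sum, Finset.smul_sum]
          refine Finset.sum_congr rfl fun l hl => ?_
          simp only [Finset.mem_range] at hk hl
          rw [apply_ite (iAs ((B.take i).sum - (B.take j).sum - (i - j))), map_zero,
            mul_ite, mul_zero, smul_ite, smul_zero]
          by_cases hg2 : i ≤ k ∧ k < l
          · rw [if_pos hg2, if_pos (⟨hgi.1, hg2.1, hg2.2⟩ : j < i ∧ i ≤ k ∧ k < l),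
              map_smul, iAs_mul, iAs_mul, iAs_Uel, iAs_iAs,
              exp_add B hB j i l hgi.1.le (by omega) (by omega),
              mul_smul_comm, smul_smul,
              mul_comm ((-1 : ℚ) ^ (i - j)) ((-1 : ℚ) ^ (l - k))]
            simp only [mul_assoc]
          · rw [if_neg hg2, if_neg (fun h => hg2 ⟨h.2.1, h.2.2⟩)]
      · rw [if_neg hgi,
          Finset.sum_eq_zero (fun k (hk : k ∈ Finset.range (B.length + 1)) =>
            if_neg (fun h => hgi ⟨h.1, by
              simp only [Finset.mem_range] at hk; omega⟩)),
          Finset.sum_eq_zero (fun k (hk : k ∈ Finset.range (B.length + 1)) =>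
            Finset.sum_eq_zero (fun l (hl : l ∈ Finset.range (B.length + 1)) =>
              if_neg (fun h => hgi ⟨h.1, by
                simp only [Finset.mem_range] at hk hl; omega⟩))), add_zero]
    rw [Finset.sum_congr rfl key2, Finset.sum_add_distrib, C3, C4, Finset.sum_comm]
    congr 1
    rw [Finset.sum_comm]
    exact Finset.sum_congr rfl fun k _ => Finset.sum_comm
  have h3 : wA [a] * mdsh (B.drop j) (w ++ v) = C5 B j a w v + C6 B j a w v := by
    rw [IH3, WR, mul_add, C5, C6]
    congr 1
    · rw [Finset.mul_sum]
      refine Finset.sum_congr rfl fun k _ => ?_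
      rw [mul_ite, mul_zero]
    · rw [Finset.mul_sum]
      refine Finset.sum_congr rfl fun k _ => ?_
      rw [Finset.mul_sum]
      refine Finset.sum_congr rfl fun l _ => ?_
      rw [mul_ite, mul_zero, mul_smul_comm]
  rw [h1, h2, h3]
  abel

def C7 (B : List ℕ) (j : ℕ) (a : ℂ) (v : List ℂ) : AA :=
  ∑ l ∈ Finset.range (B.length + 1),
    if j < l ∧ l ≤ B.length then
      ((-1 : ℚ) ^ (l - j)) • (wA [a] * Uel ((B.take l).sum - (B.take j).sum) *
        iAs ((B.take l).sum - (B.take j).sum - (l - j)) (mdsh (B.drop l) v)) else 0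

lemma expandR_B (B : List ℕ) (j : ℕ) (hj : j ≤ B.length) (a : ℂ) (v : List ℂ) :
    WR B j [a] v =
      (C1 B j a [] v + (wA [a] * mdsh (B.drop j) v)) +
      (C2 B j a [] v + C7 B j a v) := by
  rw [WR, C1, C2, C7]
  congr 1
  · have key1 : ∀ k ∈ Finset.range (B.length + 1),
        (if j ≤ k then mdsh ((B.drop j).take (k - j)) [a] *
          iAs ((B.take k).sum - (B.take j).sum - (k - j)) (mdsh (B.drop k) v) else 0) =
        (∑ i ∈ Finset.range (B.length + 1), if j < i ∧ i ≤ k then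
          ((-1 : ℚ) ^ (i - j - 1)) • (wA [a] * Uel ((B.take i).sum - (B.take j).sum - 1) *
            iAs ((B.take i).sum - (B.take j).sum - (i - j))
              (mdsh ((B.drop i).take (k - i)) [a]) *
            iAs ((B.take k).sum - (B.take j).sum - (k - j)) (mdsh (B.drop k) v)) else 0) +
        (if k = j then wA [a] * mdsh (B.drop j) v else 0) := by
      intro k hk
      simp only [Finset.mem_range] at hk
      by_cases hgk : j ≤ k
      · rw [if_pos hgk, XB B j k hgk (by omega) a, add_mul, Finset.sum_mul, ite_mul,
          zero_mul]
        congr 1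
        · refine Finset.sum_congr rfl fun i _ => ?_
          rw [ite_mul, zero_mul, smul_mul_assoc]
        · by_cases hkj : k = j
          · subst hkj
            rw [if_pos rfl, if_pos rfl]
            simp only [Nat.sub_self, iAs_zero_ap]
          · rw [if_neg hkj, if_neg hkj]
      · rw [if_neg hgk,
          Finset.sum_eq_zero (fun i (_ : i ∈ Finset.range (B.length + 1)) =>
            if_neg (fun h => hgk (by omega))),
          if_neg (fun h => hgk (by omega)), add_zero]
    rw [Finset.sum_congr rfl key1, Finset.sum_add_distrib,
      Finset.sum_ite_eq' (Finset.range (B.length + 1)) j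
        (fun _ => wA [a] * mdsh (B.drop j) v),
      if_pos (Finset.mem_range.mpr (by omega))]
  · have key2 : ∀ k ∈ Finset.range (B.length + 1), ∀ l ∈ Finset.range (B.length + 1),
        (if j ≤ k ∧ k < l then
          ((-1 : ℚ) ^ (l - k)) • (mdsh ((B.drop j).take (k - j)) [a] *
            Uel ((B.take l).sum - (B.take k).sum) *
            iAs ((B.take l).sum - (B.take j).sum - (l - j)) (mdsh (B.drop l) v)) else 0) =
        (∑ i ∈ Finset.range (B.length + 1), if j < i ∧ i ≤ k ∧ k < l then
          ((-1 : ℚ) ^ (l - k) * (-1 : ℚ) ^ (i - j - 1)) •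
            (wA [a] * Uel ((B.take i).sum - (B.take j).sum - 1) *
              iAs ((B.take i).sum - (B.take j).sum - (i - j))
                (mdsh ((B.drop i).take (k - i)) [a]) *
              Uel ((B.take l).sum - (B.take k).sum) *
              iAs ((B.take l).sum - (B.take j).sum - (l - j)) (mdsh (B.drop l) v)) else 0) +
        (if k = j then
          (if j < l ∧ l ≤ B.length then
            ((-1 : ℚ) ^ (l - j)) • (wA [a] * Uel ((B.take l).sum - (B.take j).sum) *
              iAs ((B.take l).sum - (B.take j).sum - (l - j)) (mdsh (B.drop l) v))
          else 0) else 0) := by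
      intro k hk l hl
      simp only [Finset.mem_range] at hk hl
      by_cases hg : j ≤ k ∧ k < l
      · rw [if_pos hg, XB B j k hg.1 (by omega) a, add_mul, add_mul, smul_add,
          Finset.sum_mul, Finset.sum_mul, Finset.smul_sum]
        congr 1
        · refine Finset.sum_congr rfl fun i _ => ?_
          rw [ite_mul, zero_mul, ite_mul, zero_mul, smul_ite, smul_zero,
            smul_mul_assoc, smul_mul_assoc, smul_smul]
          split_ifs <;> first | rfl | (exfalso; omega)
        · by_cases hkj : k = j
          · subst hkj
            rw [if_pos rfl, if_pos rfl,
              if_pos (⟨hg.2, by omega⟩ : k < l ∧ l ≤ B.length)]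
          · rw [if_neg hkj, zero_mul, zero_mul, smul_zero, if_neg hkj]
      · rw [if_neg hg,
          Finset.sum_eq_zero (fun i (_ : i ∈ Finset.range (B.length + 1)) =>
            if_neg (fun h => hg ⟨by omega, h.2.2⟩)), zero_add]
        by_cases hkj : k = j
        · subst hkj
          rw [if_pos rfl, if_neg (fun h => hg ⟨le_rfl, by omega⟩)]
        · rw [if_neg hkj]
    rw [Finset.sum_congr rfl (fun k hk => Finset.sum_congr rfl (key2 k hk)),
      Finset.sum_congr rfl (fun k _ => Finset.sum_add_distrib),
      Finset.sum_add_distrib]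
    congr 1
    rw [Finset.sum_congr rfl (fun k (_ : k ∈ Finset.range (B.length + 1)) =>
        (ite_sum (k = j) (Finset.range (B.length + 1)) _).symm),
      Finset.sum_ite_eq' (Finset.range (B.length + 1)) j,
      if_pos (Finset.mem_range.mpr (by omega))]

lemma expandL_B (B : List ℕ) (hB : ∀ x ∈ B, 1 ≤ x) (j : ℕ) (hj : j < B.length)
    (a : ℂ) (v : List ℂ)
    (IH1 : ∀ i, j < i → i ≤ B.length →
      mdsh (B.drop i) (a :: v) = WR B i [a] v) :
    mdsh (B.drop j) (a :: v) =
      (C1 B j a [] v + (wA [a] * mdsh (B.drop j) v)) +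
      (C2 B j a [] v + C7 B j a v) := by
  rw [mdsh_drop_expand B j hj a v]
  have h1 : (∑ i ∈ Finset.range (B.length + 1), if j < i ∧ i ≤ B.length then
        ((-1 : ℚ) ^ (i - j - 1)) • (wA [a] * Uel ((B.take i).sum - (B.take j).sum - 1) *
          iAs ((B.take i).sum - (B.take j).sum - (i - j))
            (mdsh (B.drop i) (a :: v))) else 0) =
      C1 B j a [] v + C2 B j a [] v := by
    have key1 : ∀ i ∈ Finset.range (B.length + 1),
        (if j < i ∧ i ≤ B.length then
          ((-1 : ℚ) ^ (i - j - 1)) • (wA [a] * Uel ((B.take i).sum - (B.take j).sum - 1) *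
            iAs ((B.take i).sum - (B.take j).sum - (i - j))
              (mdsh (B.drop i) (a :: v))) else 0) =
        (∑ k ∈ Finset.range (B.length + 1), if j < i ∧ i ≤ k then
          ((-1 : ℚ) ^ (i - j - 1)) • (wA [a] * Uel ((B.take i).sum - (B.take j).sum - 1) *
            iAs ((B.take i).sum - (B.take j).sum - (i - j))
              (mdsh ((B.drop i).take (k - i)) [a]) *
            iAs ((B.take k).sum - (B.take j).sum - (k - j)) (mdsh (B.drop k) v)) else 0) +
        (∑ k ∈ Finset.range (B.length + 1), ∑ l ∈ Finset.range (B.length + 1),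
          if j < i ∧ i ≤ k ∧ k < l then
          ((-1 : ℚ) ^ (l - k) * (-1 : ℚ) ^ (i - j - 1)) •
            (wA [a] * Uel ((B.take i).sum - (B.take j).sum - 1) *
              iAs ((B.take i).sum - (B.take j).sum - (i - j))
                (mdsh ((B.drop i).take (k - i)) [a]) *
              Uel ((B.take l).sum - (B.take k).sum) *
              iAs ((B.take l).sum - (B.take j).sum - (l - j)) (mdsh (B.drop l) v)) else 0) := by
      intro i _
      by_cases hgi : j < i ∧ i ≤ B.length
      · rw [if_pos hgi, IH1 i hgi.1 hgi.2, WR, map_add, mul_add, smul_add]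
        congr 1
        · rw [map_sum, Finset.mul_sum, Finset.smul_sum]
          refine Finset.sum_congr rfl fun k hk => ?_
          simp only [Finset.mem_range] at hk
          rw [apply_ite (iAs ((B.take i).sum - (B.take j).sum - (i - j))), map_zero,
            mul_ite, mul_zero, smul_ite, smul_zero]
          by_cases hik : i ≤ k
          · rw [if_pos hik, if_pos (⟨hgi.1, hik⟩ : j < i ∧ i ≤ k), iAs_mul, iAs_iAs,
              exp_add B hB j i k hgi.1.le hik (by omega), ← mul_assoc]
          · rw [if_neg hik, if_neg (fun h => hik h.2)]
        · rw [map_sum, Finset.mul_sum, Finset.smul_sum]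
          refine Finset.sum_congr rfl fun k hk => ?_
          rw [map_sum, Finset.mul_sum, Finset.smul_sum]
          refine Finset.sum_congr rfl fun l hl => ?_
          simp only [Finset.mem_range] at hk hl
          rw [apply_ite (iAs ((B.take i).sum - (B.take j).sum - (i - j))), map_zero,
            mul_ite, mul_zero, smul_ite, smul_zero]
          by_cases hg2 : i ≤ k ∧ k < l
          · rw [if_pos hg2, if_pos (⟨hgi.1, hg2.1, hg2.2⟩ : j < i ∧ i ≤ k ∧ k < l),
              map_smul, iAs_mul, iAs_mul, iAs_Uel, iAs_iAs,
              exp_add B hB j i l hgi.1.le (by omega) (by omega),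
              mul_smul_comm, smul_smul,
              mul_comm ((-1 : ℚ) ^ (i - j - 1)) ((-1 : ℚ) ^ (l - k))]
            simp only [mul_assoc]
          · rw [if_neg hg2, if_neg (fun h => hg2 ⟨h.2.1, h.2.2⟩)]
      · rw [if_neg hgi,
          Finset.sum_eq_zero (fun k (hk : k ∈ Finset.range (B.length + 1)) =>
            if_neg (fun h => hgi ⟨h.1, by
              simp only [Finset.mem_range] at hk; omega⟩)),
          Finset.sum_eq_zero (fun k (hk : k ∈ Finset.range (B.length + 1)) =>
            Finset.sum_eq_zero (fun l (hl : l ∈ Finset.range (B.length + 1)) =>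
              if_neg (fun h => hgi ⟨h.1, by
                simp only [Finset.mem_range] at hk hl; omega⟩))), add_zero]
    rw [Finset.sum_congr rfl key1, Finset.sum_add_distrib, C1, C2, Finset.sum_comm]
    congr 1
    rw [Finset.sum_comm]
    exact Finset.sum_congr rfl fun k _ => Finset.sum_comm
  have h2 : (∑ i ∈ Finset.range (B.length + 1), if j < i ∧ i ≤ B.length then
        ((-1 : ℚ) ^ (i - j)) • (wA [a] * Uel ((B.take i).sum - (B.take j).sum) *
          iAs ((B.take i).sum - (B.take j).sum - (i - j))
            (mdsh (B.drop i) v)) else 0) = C7 B j a v := by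
    rw [C7]
  rw [h1, h2]
  abel

lemma key (N : ℕ) : ∀ (B : List ℕ) (j : ℕ) (u v : List ℂ), (∀ x ∈ B, 1 ≤ x) →
    j ≤ B.length → u ≠ [] → v ≠ [] → B.length - j + u.length ≤ N →
    mdsh (B.drop j) (u ++ v) = WR B j u v := by
  induction N with
  | zero =>
      intro B j u v hB hj hu hv hN
      obtain ⟨a, u', rfl⟩ := List.exists_cons_of_ne_nil hu
      simp only [List.length_cons] at hN
      omega
  | succ N ih =>
      intro B j u v hB hj hu hv hN
      obtain ⟨a, u', rfl⟩ := List.exists_cons_of_ne_nil hu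
      obtain ⟨c, cs, rfl⟩ := List.exists_cons_of_ne_nil hv
      by_cases hjm : j < B.length
      · by_cases hu' : u' = []
        · subst hu'
          have IH1 : ∀ i, j < i → i ≤ B.length →
              mdsh (B.drop i) (a :: (c :: cs)) = WR B i [a] (c :: cs) := by
            intro i hi him
            exact ih B i [a] (c :: cs) hB him (by simp) (by simp)
              (by simp only [List.length_cons, List.length_nil] at hN ⊢; omega)
          have hL := expandL_B B hB j hjm a (c :: cs) IH1
          rw [show ([a] : List ℂ) ++ (c :: cs) = a :: (c :: cs) from rfl, hL,
            expandR_B B j (by omega) a (c :: cs)]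
        · have IH1 : ∀ i, j < i → i ≤ B.length →
              mdsh (B.drop i) (a :: (u' ++ (c :: cs))) = WR B i (a :: u') (c :: cs) := by
            intro i hi him
            exact ih B i (a :: u') (c :: cs) hB him (by simp) (by simp)
              (by simp only [List.length_cons] at hN ⊢; omega)
          have IH2 : ∀ i, j < i → i ≤ B.length →
              mdsh (B.drop i) (u' ++ (c :: cs)) = WR B i u' (c :: cs) := by
            intro i hi him
            exact ih B i u' (c :: cs) hB him hu' (by simp)
              (by simp only [List.length_cons] at hN; omega)
          have IH3 : mdsh (B.drop j) (u' ++ (c :: cs)) = WR B j u' (c :: cs) :=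
            ih B j u' (c :: cs) hB hj hu' (by simp)
              (by simp only [List.length_cons] at hN; omega)
          have hL := expandL_A B hB j hjm a u' (c :: cs) IH1 IH2 IH3
          rw [show (a :: u') ++ (c :: cs) = a :: (u' ++ (c :: cs)) from rfl, hL,
            expandR_A B j a u' (c :: cs) hu']
      · have hjl : j = B.length := by omega
        subst hjl
        have hdrop : B.drop B.length = [] := List.drop_eq_nil_of_le le_rfl
        rw [show (a :: u') ++ (c :: cs) = a :: (u' ++ (c :: cs)) from rfl, hdrop,
          mdsh_nil_left, WR]
        rw [Finset.sum_eq_single_of_mem B.length (Finset.mem_range.mpr (by omega))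
          (fun b hb hbne => if_neg (by simp only [Finset.mem_range] at hb; omega))]
        rw [Finset.sum_eq_zero (fun k hk => Finset.sum_eq_zero (fun l hl =>
          if_neg (by simp only [Finset.mem_range] at hl; omega))), add_zero]
        rw [if_pos le_rfl, hdrop, Nat.sub_self, List.take_nil, mdsh_nil_left,
          mdsh_nil_left]
        simp only [Nat.sub_self]
        rw [iAs_zero_ap, wA_mul]
        rfl

/-- Proposition `dsh_sep_as_as1`: the splitting identity for the multivariable block
shuffle product. -/
theorem mdsh_split (m n s : ℕ) (hn : 2 ≤ n) (hs1 : 1 ≤ s) (hs2 : s ≤ n - 1)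
    (b : Fin m → ℕ) (hb : ∀ i, 1 ≤ b i) (a : Fin n → ℂ) :
    mdsh (List.ofFn b) (List.ofFn a) =
      (∑ k ∈ Finset.range (m + 1),
        mdsh ((List.ofFn b).take k) ((List.ofFn a).take s) *
          iAs (((List.ofFn b).take k).sum - k)
            (mdsh ((List.ofFn b).drop k) ((List.ofFn a).drop s))) +
      (∑ k ∈ Finset.range (m + 1), ∑ l ∈ Finset.range (m + 1),
        if k < l then
          ((-1 : ℚ) ^ (l - k)) •
            (mdsh ((List.ofFn b).take k) ((List.ofFn a).take s) *
              Uel (((List.ofFn b).take l).sum - ((List.ofFn b).take k).sum) *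
              iAs (((List.ofFn b).take l).sum - l)
                (mdsh ((List.ofFn b).drop l) ((List.ofFn a).drop s)))
        else 0) := by
  have hB : ∀ x ∈ List.ofFn b, 1 ≤ x := by
    intro x hx
    rw [List.mem_ofFn] at hx
    obtain ⟨i, rfl⟩ := hx
    exact hb i
  have hlen : (List.ofFn a).length = n := List.length_ofFn (f := a)
  have hu : (List.ofFn a).take s ≠ [] := by
    apply List.ne_nil_of_length_pos
    rw [List.length_take, hlen]
    omega
  have hv : (List.ofFn a).drop s ≠ [] := by
    apply List.ne_nil_of_length_pos
    rw [List.length_drop, hlen]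
    omega
  have hk := key ((List.ofFn b).length - 0 + ((List.ofFn a).take s).length)
    (List.ofFn b) 0 ((List.ofFn a).take s) ((List.ofFn a).drop s) hB (Nat.zero_le _)
    hu hv le_rfl
  rw [List.take_append_drop, List.drop_zero] at hk
  rw [hk, WR, List.length_ofFn]
  refine congrArg₂ (· + ·) ?_ ?_
  · refine Finset.sum_congr rfl fun k _ => ?_
    rw [if_pos (Nat.zero_le k)]
    simp only [List.drop_zero, Nat.sub_zero, List.take_zero, List.sum_nil]
  · refine Finset.sum_congr rfl fun k _ => Finset.sum_congr rfl fun l _ => ?_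
    by_cases hkl : k < l
    · rw [if_pos (⟨Nat.zero_le k, hkl⟩ : 0 ≤ k ∧ k < l), if_pos hkl]
      simp only [List.drop_zero, Nat.sub_zero, List.take_zero, List.sum_nil]
    · rw [if_neg (fun h => hkl h.2), if_neg hkl]

end BlockShuffle
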